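/- arXiv:1604.07007 — 2 statements merged into one kernel-verified Lean document; each statement's English description precedes it below -/
import Mathlib

section
/- Let β be standard Brownian motion in ℝ^3 started at 0 (generator Δ) and let γ = E_0[|β(1)|^{-1}] < ∞. Then for every k ∈ ℕ and all 0 = t_0 < t_1 < ⋯ < t_k ≤ 1, E_0[ ∏_{i=1}^k |β(t_i)|^{-1} ] ≤ γ^k ∏_{i=1}^k (t_i − t_{i−1})^{-1/2}. -/
open MeasureTheory ProbabilityTheory

/-- Standard Brownian motion in `ℝ^m` started at `0`, with generator `Δ` (so each
coordinate increment over `[s,t]` is a centred Gaussian of variance `2(t-s)`),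
with independent increments and independent coordinates. -/
structure IsBrownianMotion (m : ℕ) {Ω : Type*} [MeasurableSpace Ω] (P : Measure Ω)
    (β : ℝ → Ω → EuclideanSpace ℝ (Fin m)) : Prop where
  meas : ∀ t, Measurable (β t)
  start : ∀ ω, β 0 ω = 0
  incr_coord_law : ∀ (i : Fin m) (s t : ℝ), 0 ≤ s → s ≤ t →
    Measure.map (fun ω => β t ω i - β s ω i) P =
      gaussianReal 0 (Real.toNNReal (2 * (t - s)))
  indep_incr : ∀ (n : ℕ) (t : ℕ → ℝ), Monotone t →
    iIndepFun
      (fun (k : Fin n) (ω : Ω) => β (t (k.1 + 1)) ω - β (t k.1) ω) P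
  indep_coord : ∀ (s t : ℝ), 0 ≤ s → s ≤ t →
    iIndepFun
      (fun (i : Fin m) (ω : Ω) => β t ω i - β s ω i) P


section helpers

open MeasureTheory ProbabilityTheory Real Set
open scoped ENNReal NNReal

lemma map_fun_pi_eq {Ω : Type*} [MeasurableSpace Ω] (P : Measure Ω) [IsProbabilityMeasure P]
    {ι : Type*} [Fintype ι] {E : ι → Type*} [∀ i, MeasurableSpace (E i)]
    {f : ∀ i, Ω → E i} (hf : ∀ i, Measurable (f i))
    (h : iIndepFun f P) :
    Measure.map (fun ω i => f i ω) P = Measure.pi (fun i => Measure.map (f i) P) := by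
  haveI : ∀ i, IsProbabilityMeasure (Measure.map (f i) P) :=
    fun i => Measure.isProbabilityMeasure_map (hf i).aemeasurable
  refine (Measure.pi_eq fun s hs => ?_).symm
  rw [Measure.map_apply (measurable_pi_iff.2 hf) (MeasurableSet.univ_pi hs)]
  have hpre : (fun ω i => f i ω) ⁻¹' Set.pi Set.univ s = ⋂ i ∈ Finset.univ, f i ⁻¹' s i := by
    ext ω; simp [Set.mem_univ_pi]
  rw [hpre, h.measure_inter_preimage_eq_mul Finset.univ (fun i _ => hs i)]
  exact Finset.prod_congr rfl fun i _ => (Measure.map_apply (hf i) (hs i)).symm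

lemma map_pi_comp {ι : Type*} [Fintype ι] (μ : ι → Measure ℝ)
    [∀ i, IsProbabilityMeasure (μ i)] {g : ℝ → ℝ} (hg : Measurable g) :
    Measure.map (fun (x : ι → ℝ) i => g (x i)) (Measure.pi μ) =
      Measure.pi (fun i => Measure.map g (μ i)) := by
  haveI : ∀ i, IsProbabilityMeasure (Measure.map g (μ i)) :=
    fun i => Measure.isProbabilityMeasure_map hg.aemeasurable
  refine (Measure.pi_eq fun s hs => ?_).symm
  have hgm : Measurable fun (x : ι → ℝ) i => g (x i) :=
    measurable_pi_lambda _ fun i => hg.comp (measurable_pi_apply i)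
  rw [Measure.map_apply hgm (MeasurableSet.univ_pi hs)]
  have hpre : (fun (x : ι → ℝ) i => g (x i)) ⁻¹' Set.pi Set.univ s
      = Set.pi Set.univ (fun i => g ⁻¹' s i) := by
    ext x; simp [Set.mem_univ_pi]
  rw [hpre, Measure.pi_pi]
  exact Finset.prod_congr rfl fun i _ => (Measure.map_apply hg (hs i)).symm

lemma lintegral_pi_prod {E : Type*} [MeasurableSpace E] :
    ∀ (n : ℕ) (μ : Fin n → Measure E), (∀ i, IsProbabilityMeasure (μ i)) →
    ∀ (f : Fin n → E → ℝ≥0∞), (∀ i, Measurable (f i)) →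
    ∫⁻ x : Fin n → E, ∏ i, f i (x i) ∂Measure.pi μ = ∏ i, ∫⁻ z, f i z ∂μ i := by
  intro n
  induction n with
  | zero =>
      intro μ hμ f hf
      haveI := hμ
      simp
  | succ n ih =>
      intro μ hμ f hf
      haveI := hμ
      have hp := measurePreserving_piFinSuccAbove μ 0
      simp only [Fin.zero_succAbove] at hp
      have hprod : Measurable fun (y : Fin n → E) => ∏ i : Fin n, f i.succ (y i) :=
        Finset.measurable_prod _ fun (i : Fin n) _ => (hf i.succ).comp (measurable_pi_apply i)
      have hGmeas : Measurable (fun p : E × (Fin n → E) =>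
          f 0 p.1 * ∏ i : Fin n, f i.succ (p.2 i)) := by
        refine ((hf 0).comp measurable_fst).mul ?_
        exact hprod.comp measurable_snd
      calc ∫⁻ x : Fin (n+1) → E, ∏ i, f i (x i) ∂Measure.pi μ
          = ∫⁻ p in Set.univ, f 0 p.1 * ∏ i : Fin n, f i.succ (p.2 i)
              ∂((μ 0).prod (Measure.pi fun i => μ i.succ)) := by
            rw [Measure.restrict_univ, ← hp.map_eq,
              lintegral_map hGmeas (MeasurableEquiv.measurable _)]
            refine lintegral_congr fun x => ?_
            rw [Fin.prod_univ_succ]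
            rfl
        _ = ∫⁻ z, f 0 z * ∫⁻ y : Fin n → E, ∏ i : Fin n, f i.succ (y i)
              ∂(Measure.pi fun i => μ i.succ) ∂μ 0 := by
            rw [Measure.restrict_univ, lintegral_prod _ hGmeas.aemeasurable]
            refine lintegral_congr fun z => ?_
            show (∫⁻ y : Fin n → E, f 0 z * ∏ i : Fin n, f i.succ (y i)
              ∂(Measure.pi fun i => μ i.succ)) = _
            exact lintegral_const_mul _ hprod
        _ = (∫⁻ z, f 0 z ∂μ 0) * ∏ i : Fin n, ∫⁻ z, f i.succ z ∂μ i.succ := by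
            rw [lintegral_mul_const _ (hf 0), ih (fun i => μ i.succ) (fun i => hμ i.succ)
              (fun i => f i.succ) (fun i => hf i.succ)]
        _ = ∏ i : Fin (n+1), ∫⁻ z, f i z ∂μ i := by rw [Fin.prod_univ_succ]

lemma gauss1d_shift_le (v : ℝ≥0) (hv : v ≠ 0) {c : ℝ} (hc : 0 ≤ c) (a : ℝ) :
    ∫⁻ z, ENNReal.ofReal (Real.exp (-(c * (a + z)^2))) ∂gaussianReal 0 v ≤
      ∫⁻ z, ENNReal.ofReal (Real.exp (-(c * z^2))) ∂gaussianReal 0 v := by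
  have hv' : (0:ℝ) < v := by exact_mod_cast pos_iff_ne_zero.mpr hv
  set u : ℝ := (2 * (v:ℝ))⁻¹ with hu_def
  have hu : 0 < u := by positivity
  have hA : 0 < u + c := by positivity
  set b : ℝ := c * a / (u + c) with hb_def
  have hb : (u + c) * b = c * a := by rw [hb_def]; field_simp
  -- pointwise key inequality
  have hkey : ∀ z : ℝ,
      gaussianPDFReal 0 v z * Real.exp (-(c * (a + z)^2)) ≤
      gaussianPDFReal 0 v (z + b) * Real.exp (-(c * (z + b)^2)) := by
    intro z
    have hquad : (u + c) * (z + b)^2 ≤ u * z^2 + c * (a + z)^2 := by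
      have e1 : (u + c) * ((u + c) * (z + b)^2) = ((u + c) * z + c * a)^2 := by
        rw [← hb]; ring
      have e2 : (u + c) * (u * z^2 + c * (a + z)^2) = ((u + c) * z + c * a)^2 + u * c * a^2 := by
        ring
      have h3 : 0 ≤ u * c * a^2 := by positivity
      have : (u + c) * ((u + c) * (z + b)^2) ≤ (u + c) * (u * z^2 + c * (a + z)^2) := by
        rw [e1, e2]; linarith
      exact le_of_mul_le_mul_left this hA
    simp only [gaussianPDFReal, sub_zero]
    simp only [mul_assoc, ← Real.exp_add]
    refine mul_le_mul_of_nonneg_left (Real.exp_le_exp.2 ?_) (by positivity)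
    have hdiv : ∀ w : ℝ, -w^2 / (2 * (v:ℝ)) = -(u * w^2) := by
      intro w; rw [hu_def]; field_simp
    rw [hdiv, hdiv]
    linarith
  calc ∫⁻ z, ENNReal.ofReal (Real.exp (-(c * (a + z)^2))) ∂gaussianReal 0 v
      = ∫⁻ z, ENNReal.ofReal (gaussianPDFReal 0 v z * Real.exp (-(c * (a + z)^2))) := by
        rw [gaussianReal_of_var_ne_zero _ hv,
          lintegral_withDensity_eq_lintegral_mul _ (measurable_gaussianPDF 0 v)
            (by fun_prop)]
        refine lintegral_congr fun z => ?_
        rw [Pi.mul_apply, gaussianPDF]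
        rw [← ENNReal.ofReal_mul (gaussianPDFReal_nonneg 0 v z)]
    _ ≤ ∫⁻ z, ENNReal.ofReal (gaussianPDFReal 0 v (z + b) * Real.exp (-(c * (z + b)^2))) :=
        lintegral_mono fun z => ENNReal.ofReal_le_ofReal (hkey z)
    _ = ∫⁻ z, ENNReal.ofReal (gaussianPDFReal 0 v z * Real.exp (-(c * z^2))) :=
        lintegral_add_right_eq_self
          (fun z => ENNReal.ofReal (gaussianPDFReal 0 v z * Real.exp (-(c * z^2)))) b
    _ = ∫⁻ z, ENNReal.ofReal (Real.exp (-(c * z^2))) ∂gaussianReal 0 v := by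
        rw [gaussianReal_of_var_ne_zero _ hv,
          lintegral_withDensity_eq_lintegral_mul _ (measurable_gaussianPDF 0 v)
            (by fun_prop)]
        refine lintegral_congr fun z => ?_
        rw [Pi.mul_apply, gaussianPDF]
        rw [← ENNReal.ofReal_mul (gaussianPDFReal_nonneg 0 v z)]

lemma ofReal_inv_eq_lintegral {r : ℝ} (hr : 0 < r) :
    ENNReal.ofReal r⁻¹ = ENNReal.ofReal (Real.sqrt (2 / π)) *
      ∫⁻ s in Ioi (0:ℝ), ENNReal.ofReal (Real.exp (-(s^2/2 * r^2))) := by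
  have hb : 0 < r^2/2 := by positivity
  have hexp : ∀ s : ℝ, -(s^2/2 * r^2) = -(r^2/2) * s^2 := fun s => by ring
  have hint : ∫⁻ s in Ioi (0:ℝ), ENNReal.ofReal (Real.exp (-(s^2/2 * r^2)))
      = ENNReal.ofReal (∫ s in Ioi (0:ℝ), Real.exp (-(r^2/2) * s^2)) := by
    simp_rw [hexp]
    rw [← ofReal_integral_eq_lintegral_ofReal ((integrable_exp_neg_mul_sq hb).integrableOn)
      (ae_of_all _ fun s => (Real.exp_pos _).le)]
  rw [hint, integral_gaussian_Ioi, ← ENNReal.ofReal_mul (Real.sqrt_nonneg _)]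
  congr 1
  rw [← mul_div_assoc, ← Real.sqrt_mul (by positivity)]
  have h1 : 2 / π * (π / (r^2/2)) = (2 / r)^2 := by
    field_simp
  rw [h1, Real.sqrt_sq (by positivity)]
  field_simp

noncomputable def gauss3 (v : ℝ≥0) : Measure (EuclideanSpace ℝ (Fin 3)) :=
  Measure.map (MeasurableEquiv.toLp 2 (Fin 3 → ℝ)) (Measure.pi fun _ : Fin 3 => gaussianReal 0 v)

instance (v : ℝ≥0) : IsProbabilityMeasure (gauss3 v) := by
  unfold gauss3
  exact Measure.isProbabilityMeasure_map (MeasurableEquiv.measurable _).aemeasurable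

lemma phi_meas : Measurable fun z : EuclideanSpace ℝ (Fin 3) => ENNReal.ofReal ‖z‖⁻¹ :=
  (measurable_norm.inv).ennreal_ofReal

lemma gauss3_singleton (v : ℝ≥0) (hv : v ≠ 0) (p : EuclideanSpace ℝ (Fin 3)) :
    gauss3 v {p} = 0 := by
  have h1 : gaussianReal 0 v {p 0} = 0 := by
    rw [gaussianReal_of_var_ne_zero _ hv, withDensity_apply _ (measurableSet_singleton _)]
    exact setLIntegral_measure_zero _ _ (Real.volume_singleton)
  have hsub : ((MeasurableEquiv.toLp 2 (Fin 3 → ℝ)) ⁻¹' {p} : Set (Fin 3 → ℝ)) ⊆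
      Set.pi Set.univ (fun i => {p i}) := by
    intro z hz
    simp only [Set.mem_preimage, Set.mem_singleton_iff] at hz
    subst hz
    intro i _
    rfl
  rw [gauss3, MeasurableEquiv.map_apply]
  refine measure_mono_null hsub ?_
  rw [Measure.pi_pi]
  exact Finset.prod_eq_zero (Finset.mem_univ 0) h1

lemma keyA (v : ℝ≥0) (hv : v ≠ 0) (y : EuclideanSpace ℝ (Fin 3)) :
    ∫⁻ x, ENNReal.ofReal ‖y + x‖⁻¹ ∂gauss3 v ≤ ∫⁻ x, ENNReal.ofReal ‖x‖⁻¹ ∂gauss3 v := by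
  have hunc : ∀ w : EuclideanSpace ℝ (Fin 3), Measurable (Function.uncurry
      fun (x : EuclideanSpace ℝ (Fin 3)) (s : ℝ) =>
        ENNReal.ofReal (Real.exp (-(s^2/2 * ‖w + x‖^2)))) := by
    intro w
    apply Measurable.ennreal_ofReal
    apply Real.measurable_exp.comp
    apply Measurable.neg
    exact ((measurable_snd.pow_const 2).div_const 2).mul
      ((measurable_norm.comp (measurable_const.add measurable_fst)).pow_const 2)
  have main : ∀ w : EuclideanSpace ℝ (Fin 3),
      ∫⁻ x, ENNReal.ofReal ‖w + x‖⁻¹ ∂gauss3 v =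
      ENNReal.ofReal (Real.sqrt (2 / π)) *
        ∫⁻ s in Ioi (0:ℝ), ∏ i : Fin 3,
          ∫⁻ z, ENNReal.ofReal (Real.exp (-(s^2/2 * (w i + z)^2))) ∂gaussianReal 0 v := by
    intro w
    have hae : ∀ᵐ x ∂gauss3 v, x ≠ -w := by
      rw [ae_iff]
      convert gauss3_singleton v hv (-w) using 2
      ext z; simp
    have step1 : ∫⁻ x, ENNReal.ofReal ‖w + x‖⁻¹ ∂gauss3 v =
        ∫⁻ x, (ENNReal.ofReal (Real.sqrt (2 / π)) *
          ∫⁻ s in Ioi (0:ℝ), ENNReal.ofReal (Real.exp (-(s^2/2 * ‖w + x‖^2)))) ∂gauss3 v := by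
      refine lintegral_congr_ae ?_
      filter_upwards [hae] with x hx
      have hpos : 0 < ‖w + x‖ := by
        rw [norm_pos_iff]
        intro h
        exact hx (eq_neg_of_add_eq_zero_right h)
      exact ofReal_inv_eq_lintegral hpos
    have hin : Measurable fun x : EuclideanSpace ℝ (Fin 3) =>
        ∫⁻ s in Ioi (0:ℝ), ENNReal.ofReal (Real.exp (-(s^2/2 * ‖w + x‖^2))) :=
      (hunc w).lintegral_prod_right'
    rw [step1, lintegral_const_mul _ hin]
    congr 1
    rw [lintegral_lintegral_swap (hunc w).aemeasurable]
    refine lintegral_congr fun s => ?_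
    have hnorm : ∀ x : EuclideanSpace ℝ (Fin 3),
        ENNReal.ofReal (Real.exp (-(s^2/2 * ‖w + x‖^2))) =
        ∏ i : Fin 3, ENNReal.ofReal (Real.exp (-(s^2/2 * (w i + x i)^2))) := by
      intro x
      have h2 : ‖w + x‖^2 = ∑ i : Fin 3, (w i + x i)^2 := by
        rw [EuclideanSpace.norm_eq, Real.sq_sqrt (by positivity)]
        refine Finset.sum_congr rfl fun i _ => ?_
        rw [Real.norm_eq_abs, sq_abs, PiLp.add_apply]
      rw [h2, Finset.mul_sum, ← Finset.sum_neg_distrib, Real.exp_sum,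
        ENNReal.ofReal_prod_of_nonneg (fun i _ => (Real.exp_pos _).le)]
    calc ∫⁻ x, ENNReal.ofReal (Real.exp (-(s^2/2 * ‖w + x‖^2))) ∂gauss3 v
        = ∫⁻ x, ∏ i : Fin 3, ENNReal.ofReal (Real.exp (-(s^2/2 * (w i + x i)^2)))
            ∂gauss3 v := lintegral_congr fun x => hnorm x
      _ = ∏ i : Fin 3, ∫⁻ z, ENNReal.ofReal (Real.exp (-(s^2/2 * (w i + z)^2)))
            ∂gaussianReal 0 v := by
          rw [gauss3, lintegral_map_equiv]
          exact lintegral_pi_prod 3 (fun _ => gaussianReal 0 v) (fun _ => inferInstance)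
            (fun i z => ENNReal.ofReal (Real.exp (-(s^2/2 * (w i + z)^2))))
            (fun i => by fun_prop)
  have h00 : ∫⁻ x, ENNReal.ofReal ‖x‖⁻¹ ∂gauss3 v =
      ∫⁻ x, ENNReal.ofReal ‖(0 : EuclideanSpace ℝ (Fin 3)) + x‖⁻¹ ∂gauss3 v :=
    lintegral_congr fun x => by rw [zero_add]
  rw [main y, h00, main 0]
  refine mul_le_mul_right (lintegral_mono fun s => Finset.prod_le_prod' fun i _ => ?_) _
  have h0 : ((0 : EuclideanSpace ℝ (Fin 3)) i) = (0:ℝ) := rfl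
  simp only [h0, zero_add]
  exact gauss1d_shift_le v hv (by positivity) (y i)

lemma gauss3_scale {d : ℝ} (hd : 0 < d) :
    ∫⁻ x, ENNReal.ofReal ‖x‖⁻¹ ∂gauss3 (Real.toNNReal (2*d)) =
      ENNReal.ofReal (Real.sqrt d)⁻¹ * ∫⁻ x, ENNReal.ofReal ‖x‖⁻¹ ∂gauss3 (Real.toNNReal 2) := by
  have hsd : 0 < Real.sqrt d := Real.sqrt_pos.2 hd
  have hmap0 : Measure.map (fun z : ℝ => Real.sqrt d * z) (gaussianReal 0 (Real.toNNReal 2)) =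
      gaussianReal 0 (Real.toNNReal (2*d)) := by
    have := gaussianReal_map_const_mul (μ := 0) (v := Real.toNNReal 2) (Real.sqrt d)
    simp only [mul_zero] at this
    rw [show (fun z : ℝ => Real.sqrt d * z) = (Real.sqrt d * ·) from rfl, this]
    congr 1
    rw [← NNReal.coe_inj]
    push_cast
    rw [Real.coe_toNNReal _ (by norm_num), Real.coe_toNNReal _ (by positivity),
      Real.sq_sqrt hd.le]
    ring
  have hsmul : Measurable fun (x : EuclideanSpace ℝ (Fin 3)) => Real.sqrt d • x := by
    fun_prop
  have hmap : Measure.map (fun (x : EuclideanSpace ℝ (Fin 3)) => Real.sqrt d • x)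
      (gauss3 (Real.toNNReal 2)) = gauss3 (Real.toNNReal (2*d)) := by
    have hg : Measurable fun z : ℝ => Real.sqrt d * z := by fun_prop
    have h := map_pi_comp (fun _ : Fin 3 => gaussianReal 0 (Real.toNNReal 2)) hg
    simp only [hmap0] at h
    have hpm : Measurable fun (x : Fin 3 → ℝ) (i : Fin 3) => Real.sqrt d * x i :=
      measurable_pi_lambda _ fun i => (measurable_pi_apply i).const_mul _
    rw [gauss3, gauss3, Measure.map_map hsmul (MeasurableEquiv.measurable _), ← h,
      Measure.map_map (MeasurableEquiv.measurable _) hpm]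
    rfl
  rw [← hmap, lintegral_map phi_meas hsmul]
  have hpt : ∀ x : EuclideanSpace ℝ (Fin 3),
      ENNReal.ofReal ‖(Real.sqrt d • x : EuclideanSpace ℝ (Fin 3))‖⁻¹ =
      ENNReal.ofReal (Real.sqrt d)⁻¹ * ENNReal.ofReal ‖x‖⁻¹ := by
    intro x
    rw [norm_smul, Real.norm_eq_abs, abs_of_nonneg hsd.le, mul_inv,
      ENNReal.ofReal_mul (by positivity)]
  exact (lintegral_congr fun a => hpt a).trans (lintegral_const_mul _ phi_meas)
lemma sum_Iic_ite {n : ℕ} {M : Type*} [AddCommMonoid M] (x : Fin n → M) (i : Fin n) :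
    ∑ j ∈ Finset.Iic i, x j = ∑ j : Fin n, if j ≤ i then x j else 0 := by
  rw [← Finset.sum_filter]
  congr 1
  ext j
  simp [Finset.mem_Iic]

lemma sum_Iic_zero {n : ℕ} {M : Type*} [AddCommMonoid M] (x : Fin (n+1) → M) :
    ∑ j ∈ Finset.Iic (0 : Fin (n+1)), x j = x 0 := by
  rw [sum_Iic_ite]
  rw [Finset.sum_eq_single 0]
  · simp
  · intro j _ hj
    simp [Fin.le_zero_iff, hj]
  · simp

lemma sum_Iic_succ {n : ℕ} {M : Type*} [AddCommMonoid M] (x : Fin (n+1) → M) (i : Fin n) :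
    ∑ j ∈ Finset.Iic i.succ, x j = x 0 + ∑ j ∈ Finset.Iic i, x j.succ := by
  rw [sum_Iic_ite, Fin.sum_univ_succ, if_pos (Fin.zero_le _)]
  congr 1
  rw [sum_Iic_ite (fun j => x j.succ) i]
  refine Finset.sum_congr rfl fun j _ => ?_
  congr 1
  simp [Fin.succ_le_succ_iff]

lemma iterBound :
    ∀ (n : ℕ) (μ : Fin n → Measure (EuclideanSpace ℝ (Fin 3))),
    (∀ i, IsProbabilityMeasure (μ i)) → ∀ (c : Fin n → ℝ≥0∞),
    (∀ (i : Fin n) (y : EuclideanSpace ℝ (Fin 3)),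
      ∫⁻ z, ENNReal.ofReal ‖y + z‖⁻¹ ∂μ i ≤ c i) →
    ∀ y : EuclideanSpace ℝ (Fin 3),
      ∫⁻ x : Fin n → EuclideanSpace ℝ (Fin 3),
        ∏ i, ENNReal.ofReal ‖y + ∑ j ∈ Finset.Iic i, x j‖⁻¹ ∂Measure.pi μ ≤ ∏ i, c i := by
  intro n
  induction n with
  | zero =>
      intro μ hμ c hc y
      haveI := hμ
      simp
  | succ n ih =>
      intro μ hμ c hc y
      haveI := hμ
      have hp := measurePreserving_piFinSuccAbove μ 0
      simp only [Fin.zero_succAbove] at hp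
      -- measurability helpers
      have hsum : ∀ i : Fin n, Measurable fun b : Fin n → EuclideanSpace ℝ (Fin 3) =>
          ∑ j ∈ Finset.Iic i, b j :=
        fun i => Finset.measurable_sum _ fun j _ => measurable_pi_apply j
      have hprodmeas : ∀ w : EuclideanSpace ℝ (Fin 3),
          Measurable fun b : Fin n → EuclideanSpace ℝ (Fin 3) =>
            ∏ i : Fin n, ENNReal.ofReal ‖w + ∑ j ∈ Finset.Iic i, b j‖⁻¹ :=
        fun w => Finset.measurable_prod _ fun i _ =>
          phi_meas.comp (measurable_const.add (hsum i))
      have hGmeas : Measurable fun p :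
          (EuclideanSpace ℝ (Fin 3)) × (Fin n → EuclideanSpace ℝ (Fin 3)) =>
          ENNReal.ofReal ‖y + p.1‖⁻¹ *
            ∏ i : Fin n, ENNReal.ofReal ‖(y + p.1) + ∑ j ∈ Finset.Iic i, p.2 j‖⁻¹ := by
        refine (phi_meas.comp (measurable_const.add measurable_fst)).mul ?_
        refine Finset.measurable_prod _ fun i _ => phi_meas.comp ?_
        exact (measurable_const.add measurable_fst).add
          ((Finset.measurable_sum _ fun j _ =>
            (measurable_pi_apply j).comp measurable_snd))
      calc ∫⁻ x : Fin (n+1) → EuclideanSpace ℝ (Fin 3),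
            ∏ i, ENNReal.ofReal ‖y + ∑ j ∈ Finset.Iic i, x j‖⁻¹ ∂Measure.pi μ
          = ∫⁻ p, ENNReal.ofReal ‖y + p.1‖⁻¹ *
              ∏ i : Fin n, ENNReal.ofReal ‖(y + p.1) + ∑ j ∈ Finset.Iic i, p.2 j‖⁻¹
              ∂((μ 0).prod (Measure.pi fun j => μ j.succ)) := by
            rw [← hp.map_eq, lintegral_map hGmeas (MeasurableEquiv.measurable _)]
            refine lintegral_congr fun x => ?_
            rw [Fin.prod_univ_succ]
            have h1 : ∑ j ∈ Finset.Iic (0 : Fin (n+1)), x j = x 0 := sum_Iic_zero x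
            have h2 : ∀ i : Fin n, ∑ j ∈ Finset.Iic i.succ, x j
                = x 0 + ∑ j ∈ Finset.Iic i, x j.succ := fun i => sum_Iic_succ x i
            simp only [h1, h2, add_assoc]
            rfl
        _ = ∫⁻ a, ENNReal.ofReal ‖y + a‖⁻¹ *
              ∫⁻ b : Fin n → EuclideanSpace ℝ (Fin 3),
                ∏ i : Fin n, ENNReal.ofReal ‖(y + a) + ∑ j ∈ Finset.Iic i, b j‖⁻¹
                ∂(Measure.pi fun j => μ j.succ) ∂μ 0 := by
            rw [lintegral_prod _ hGmeas.aemeasurable]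
            refine lintegral_congr fun a => ?_
            show (∫⁻ b : Fin n → EuclideanSpace ℝ (Fin 3),
              ENNReal.ofReal ‖y + a‖⁻¹ *
                ∏ i : Fin n, ENNReal.ofReal ‖(y + a) + ∑ j ∈ Finset.Iic i, b j‖⁻¹
              ∂(Measure.pi fun j => μ j.succ)) = _
            exact lintegral_const_mul _ (hprodmeas (y + a))
        _ ≤ ∫⁻ a, ENNReal.ofReal ‖y + a‖⁻¹ * ∏ i : Fin n, c i.succ ∂μ 0 := by
            refine lintegral_mono fun a => mul_le_mul_right ?_ _
            exact ih (fun j => μ j.succ) (fun j => hμ j.succ) (fun j => c j.succ)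
              (fun j => hc j.succ) (y + a)
        _ ≤ ∏ i : Fin (n+1), c i := by
            have hφy : Measurable fun a : EuclideanSpace ℝ (Fin 3) =>
                ENNReal.ofReal ‖y + a‖⁻¹ := by
              exact phi_meas.comp (measurable_const.add measurable_id)
            rw [lintegral_mul_const _ hφy, Fin.prod_univ_succ]
            exact mul_le_mul_left (hc 0 y) _

end helpers

/-- Iterated inverse-moment bound for Brownian motion in `ℝ³`: with
`γ = E₀[|β(1)|⁻¹] < ∞`, for every `k` and all times `0 = t₀ < t₁ < ⋯ < t_k ≤ 1`,
`E₀[∏ᵢ |β(tᵢ)|⁻¹] ≤ γ^k ∏ᵢ (tᵢ - tᵢ₋₁)^{-1/2}`. -/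
theorem iterated_inverse_moment_bound
    {Ω : Type*} [MeasurableSpace Ω] (P : Measure Ω) [IsProbabilityMeasure P]
    (β : ℝ → Ω → EuclideanSpace ℝ (Fin 3))
    (hβ : IsBrownianMotion 3 P β)
    (γ : ℝ) (hγ : γ = ∫ ω, ‖β 1 ω‖⁻¹ ∂P) (hγfin : Integrable (fun ω => ‖β 1 ω‖⁻¹) P)
    (k : ℕ) (t : ℕ → ℝ) (ht0 : t 0 = 0)
    (hmono : ∀ i < k, t i < t (i + 1)) (htk : t k ≤ 1) :
    ∫ ω, ∏ i ∈ Finset.range k, ‖β (t (i + 1)) ω‖⁻¹ ∂P ≤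
      γ ^ k * ∏ i ∈ Finset.range k, (Real.sqrt (t (i + 1) - t i))⁻¹ := by
  have hγ0 : 0 ≤ γ := hγ ▸ integral_nonneg fun ω => inv_nonneg.2 (norm_nonneg _)
  -- monotonicity of t on [0, k]
  have htle : ∀ j, j ≤ k → ∀ i, i ≤ j → t i ≤ t j := by
    intro j
    induction j with
    | zero => intro _ i hi; rw [Nat.le_zero.mp hi]
    | succ j ih =>
        intro hjk i hi
        rcases Nat.eq_or_lt_of_le hi with rfl | hlt
        · exact le_rfl
        · have hij : i ≤ j := Nat.lt_succ_iff.mp hlt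
          exact le_trans (ih (Nat.le_of_succ_le hjk) i hij)
            (le_of_lt (hmono j (Nat.lt_of_succ_le hjk)))
  have ht0le : ∀ i : Fin k, 0 ≤ t i.1 := by
    intro i
    have := htle i.1 i.2.le 0 (Nat.zero_le _)
    rwa [ht0] at this
  have hΔ : ∀ i : Fin k, 0 < t (i.1 + 1) - t i.1 := fun i => sub_pos.2 (hmono i.1 i.2)
  -- measurability
  have hcoordmeas : ∀ (s : ℝ) (j : Fin 3), Measurable fun ω => β s ω j :=
    fun s j => (measurable_pi_apply j).comp ((WithLp.measurable_ofLp 2 _).comp (hβ.meas s))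
  have hXmeas : ∀ i : Fin k, Measurable fun ω => β (t (i.1+1)) ω - β (t i.1) ω :=
    fun i => (hβ.meas _).sub (hβ.meas _)
  -- law of a single increment
  have hXlaw : ∀ i : Fin k,
      Measure.map (fun ω => β (t (i.1+1)) ω - β (t i.1) ω) P =
        gauss3 (Real.toNNReal (2 * (t (i.1+1) - t i.1))) := by
    intro i
    have h1 := map_fun_pi_eq P
      (f := fun (j : Fin 3) ω => β (t (i.1+1)) ω j - β (t i.1) ω j)
      (fun j => (hcoordmeas _ j).sub (hcoordmeas _ j))
      (hβ.indep_coord (t i.1) (t (i.1+1)) (ht0le i) (le_of_lt (hmono i.1 i.2)))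
    have hfun : (fun ω => β (t (i.1+1)) ω - β (t i.1) ω) = (MeasurableEquiv.toLp 2 (Fin 3 → ℝ))
        ∘ (fun ω (j : Fin 3) => β (t (i.1+1)) ω j - β (t i.1) ω j) := by
      funext ω; apply PiLp.ext; intro j; simp
    rw [hfun, ← Measure.map_map (MeasurableEquiv.measurable _)
      (measurable_pi_lambda (fun ω (j : Fin 3) => β (t (i.1+1)) ω j - β (t i.1) ω j)
        fun j => (hcoordmeas _ j).sub (hcoordmeas _ j)), h1, gauss3]
    congr 2
    funext j
    exact hβ.incr_coord_law j (t i.1) (t (i.1+1)) (ht0le i) (le_of_lt (hmono i.1 i.2))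
  -- joint law of the increments
  have hmono' : Monotone (fun m => t (min m k)) := fun a b hab =>
    htle (min b k) (min_le_right _ _) (min a k) (min_le_min hab le_rfl)
  have hindep := hβ.indep_incr k (fun m => t (min m k)) hmono'
  have hfeq : (fun (κ : Fin k) (ω : Ω) =>
      β ((fun m => t (min m k)) (κ.1 + 1)) ω - β ((fun m => t (min m k)) κ.1) ω)
      = fun (κ : Fin k) (ω : Ω) => β (t (κ.1+1)) ω - β (t κ.1) ω := by
    funext κ ω
    have e1 : min (κ.1+1) k = κ.1+1 := Nat.min_eq_left (Nat.succ_le_of_lt κ.2)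
    have e2 : min κ.1 k = κ.1 := Nat.min_eq_left κ.2.le
    simp only [e1, e2]
  rw [hfeq] at hindep
  have hjoint := map_fun_pi_eq P (fun i => hXmeas i) hindep
  simp only [hXlaw] at hjoint
  -- law of β 1
  have hβ1 : Measure.map (β 1) P = gauss3 (Real.toNNReal 2) := by
    have h1 := map_fun_pi_eq P
      (f := fun (j : Fin 3) ω => β 1 ω j - β 0 ω j)
      (fun j => (hcoordmeas 1 j).sub (hcoordmeas 0 j))
      (hβ.indep_coord 0 1 le_rfl zero_le_one)
    have hfun : β 1 = (MeasurableEquiv.toLp 2 (Fin 3 → ℝ))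
        ∘ (fun ω (j : Fin 3) => β 1 ω j - β 0 ω j) := by
      funext ω; apply PiLp.ext; intro j; simp [hβ.start ω]
    rw [hfun, ← Measure.map_map (MeasurableEquiv.measurable _)
      (measurable_pi_lambda (fun ω (j : Fin 3) => β 1 ω j - β 0 ω j)
        fun j => (hcoordmeas 1 j).sub (hcoordmeas 0 j)), h1, gauss3]
    congr 2
    funext j
    have h2 := hβ.incr_coord_law j 0 1 le_rfl zero_le_one
    rw [show (2 * ((1:ℝ) - 0)) = 2 by norm_num] at h2
    exact h2
  -- identification of γ
  have hγΓ : ENNReal.ofReal γ = ∫⁻ x, ENNReal.ofReal ‖x‖⁻¹ ∂gauss3 (Real.toNNReal 2) := by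
    rw [hγ, ofReal_integral_eq_lintegral_ofReal hγfin
      (ae_of_all _ fun ω => inv_nonneg.2 (norm_nonneg _)),
      ← lintegral_map phi_meas (hβ.meas 1), hβ1]
  -- the one-step bound
  have hc : ∀ (i : Fin k) (y : EuclideanSpace ℝ (Fin 3)),
      ∫⁻ z, ENNReal.ofReal ‖y + z‖⁻¹ ∂gauss3 (Real.toNNReal (2 * (t (i.1+1) - t i.1))) ≤
        ENNReal.ofReal (Real.sqrt (t (i.1+1) - t i.1))⁻¹ * ENNReal.ofReal γ := by
    intro i y
    have hne : Real.toNNReal (2 * (t (i.1+1) - t i.1)) ≠ 0 :=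
      (Real.toNNReal_pos.mpr (by have := hΔ i; positivity)).ne'
    refine (keyA _ hne y).trans ?_
    rw [gauss3_scale (hΔ i), hγΓ]
  -- telescoping sums
  have htel : ∀ (ω : Ω) (m : ℕ) (hm : m < k),
      ∑ j ∈ Finset.Iic (⟨m, hm⟩ : Fin k), (β (t (j.1+1)) ω - β (t j.1) ω)
        = β (t (m+1)) ω := by
    intro ω m
    induction m with
    | zero =>
        intro hm
        rw [sum_Iic_ite, Finset.sum_eq_single (⟨0, hm⟩ : Fin k)]
        · rw [if_pos le_rfl]
          show β (t 1) ω - β (t 0) ω = β (t 1) ω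
          rw [ht0, hβ.start ω, sub_zero]
        · intro j _ hj
          rw [if_neg]
          intro hle
          exact hj (Fin.ext (Nat.le_zero.mp hle))
        · intro h; exact absurd (Finset.mem_univ _) h
    | succ m ih =>
        intro hm
        have hm' : m < k := Nat.lt_of_succ_lt hm
        have hins : Finset.Iic (⟨m+1, hm⟩ : Fin k)
            = insert (⟨m+1, hm⟩ : Fin k) (Finset.Iic (⟨m, hm'⟩ : Fin k)) := by
          ext j
          simp only [Finset.mem_Iic, Finset.mem_insert, Fin.le_def, Fin.ext_iff]
          omega
        have hnotmem : (⟨m+1, hm⟩ : Fin k) ∉ Finset.Iic (⟨m, hm'⟩ : Fin k) := by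
          simp only [Finset.mem_Iic, Fin.le_def]
          omega
        rw [hins, Finset.sum_insert hnotmem, ih hm']
        show β (t (m+1+1)) ω - β (t (m+1)) ω + β (t (m+1)) ω = β (t (m+1+1)) ω
        abel
  have hteli : ∀ (ω : Ω) (i : Fin k),
      β (t (i.1+1)) ω = ∑ j ∈ Finset.Iic i, (β (t (j.1+1)) ω - β (t j.1) ω) := by
    intro ω i
    have := htel ω i.1 i.2
    simp only [Fin.eta] at this
    exact this.symm
  -- core estimate in ℝ≥0∞
  have hg : Measurable fun x : Fin k → EuclideanSpace ℝ (Fin 3) =>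
      ∏ i : Fin k, ENNReal.ofReal ‖(0 : EuclideanSpace ℝ (Fin 3)) + ∑ j ∈ Finset.Iic i, x j‖⁻¹ :=
    Finset.measurable_prod _ fun i _ => phi_meas.comp
      (measurable_const.add (Finset.measurable_sum _ fun j _ => measurable_pi_apply j))
  have hXvec : Measurable fun ω (i : Fin k) => β (t (i.1+1)) ω - β (t i.1) ω :=
    measurable_pi_lambda _ fun i => hXmeas i
  have hkey : ∫⁻ ω, ∏ i : Fin k, ENNReal.ofReal ‖β (t (i.1+1)) ω‖⁻¹ ∂P ≤
      ∏ i : Fin k, (ENNReal.ofReal (Real.sqrt (t (i.1+1) - t i.1))⁻¹ * ENNReal.ofReal γ) := by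
    calc ∫⁻ ω, ∏ i : Fin k, ENNReal.ofReal ‖β (t (i.1+1)) ω‖⁻¹ ∂P
        = ∫⁻ ω, ∏ i : Fin k, ENNReal.ofReal ‖(0 : EuclideanSpace ℝ (Fin 3)) +
            ∑ j ∈ Finset.Iic i, (β (t (j.1+1)) ω - β (t j.1) ω)‖⁻¹ ∂P :=
          lintegral_congr fun ω => Finset.prod_congr rfl fun i _ => by
            rw [zero_add, ← hteli ω i]
      _ = ∫⁻ x : Fin k → EuclideanSpace ℝ (Fin 3),
            ∏ i : Fin k, ENNReal.ofReal ‖(0 : EuclideanSpace ℝ (Fin 3)) +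
              ∑ j ∈ Finset.Iic i, x j‖⁻¹
            ∂(Measure.map (fun ω (i : Fin k) => β (t (i.1+1)) ω - β (t i.1) ω) P) :=
          (lintegral_map hg hXvec).symm
      _ = ∫⁻ x : Fin k → EuclideanSpace ℝ (Fin 3),
            ∏ i : Fin k, ENNReal.ofReal ‖(0 : EuclideanSpace ℝ (Fin 3)) +
              ∑ j ∈ Finset.Iic i, x j‖⁻¹
            ∂(Measure.pi fun i : Fin k =>
              gauss3 (Real.toNNReal (2 * (t (i.1+1) - t i.1)))) := by rw [hjoint]
      _ ≤ _ := iterBound k _ (fun i => inferInstance) _ hc 0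
  -- conclusion
  have hnn : 0 ≤ᵐ[P] fun ω => ∏ i ∈ Finset.range k, ‖β (t (i+1)) ω‖⁻¹ :=
    ae_of_all _ fun ω => Finset.prod_nonneg fun i _ => inv_nonneg.2 (norm_nonneg _)
  have hsm : AEStronglyMeasurable (fun ω => ∏ i ∈ Finset.range k, ‖β (t (i+1)) ω‖⁻¹) P :=
    (Finset.measurable_prod _ fun i _ => ((hβ.meas _).norm).inv).aestronglyMeasurable
  rw [integral_eq_lintegral_of_nonneg_ae hnn hsm]
  have hRHS0 : 0 ≤ γ ^ k * ∏ i ∈ Finset.range k, (Real.sqrt (t (i+1) - t i))⁻¹ :=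
    mul_nonneg (pow_nonneg hγ0 _)
      (Finset.prod_nonneg fun i _ => inv_nonneg.2 (Real.sqrt_nonneg _))
  refine ENNReal.toReal_le_of_le_ofReal hRHS0 ?_
  calc ∫⁻ ω, ENNReal.ofReal (∏ i ∈ Finset.range k, ‖β (t (i+1)) ω‖⁻¹) ∂P
      = ∫⁻ ω, ∏ i : Fin k, ENNReal.ofReal ‖β (t (i.1+1)) ω‖⁻¹ ∂P := by
        refine lintegral_congr fun ω => ?_
        rw [ENNReal.ofReal_prod_of_nonneg fun i _ => inv_nonneg.2 (norm_nonneg _),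
          ← Fin.prod_univ_eq_prod_range (fun m => ENNReal.ofReal ‖β (t (m+1)) ω‖⁻¹) k]
    _ ≤ ∏ i : Fin k, (ENNReal.ofReal (Real.sqrt (t (i.1+1) - t i.1))⁻¹ * ENNReal.ofReal γ) :=
        hkey
    _ = ENNReal.ofReal (γ ^ k * ∏ i ∈ Finset.range k, (Real.sqrt (t (i+1) - t i))⁻¹) := by
        rw [Finset.prod_mul_distrib, Finset.prod_const, Finset.card_univ, Fintype.card_fin,
          ← ENNReal.ofReal_pow hγ0,
          ← ENNReal.ofReal_prod_of_nonneg fun i _ => inv_nonneg.2 (Real.sqrt_nonneg _),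
          ← ENNReal.ofReal_mul (Finset.prod_nonneg fun i _ => inv_nonneg.2 (Real.sqrt_nonneg _))]
        congr 1
        rw [mul_comm, Fin.prod_univ_eq_prod_range (fun m => (Real.sqrt (t (m+1) - t m))⁻¹) k]
end

section
/- Let Ω(t) be a family of (random) open subsets of 𝕋^m and write λ_t = λ_1(Ω(t)), T_t = T(Ω(t)) for the principal Dirichlet eigenvalue and torsional rigidity, with the pointwise bound T_t ≥ λ_t^{-1} π(s)^{-1} e^{-s λ_t} for all s > 0 (π(s) the diagonal torus heat kernel). If E[T_t] → 0 as t → ∞, then for all t large enough E[λ_t] ≥ E[T_t]^{-2/(m+2)}. -/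
open MeasureTheory Real Filter

private lemma tangent_line (s a q : ℝ) (hs : 0 < s) (ha : 0 < a) (hq : 0 < q) :
    a⁻¹ * Real.exp (-(s*a)) * (1 - (a⁻¹ + s) * (q - a)) ≤ q⁻¹ * Real.exp (-(s*q)) := by
  have hE : Real.exp (-(s*q)) = Real.exp (-(s*(q-a))) * Real.exp (-(s*a)) := by
    rw [← Real.exp_add]; ring_nf
  have h1 : 1 - s*(q-a) ≤ Real.exp (-(s*(q-a))) := by
    have := Real.add_one_le_exp (-(s*(q-a))); linarith
  have key : q * (a⁻¹ * (1 - (a⁻¹ + s) * (q - a))) ≤ Real.exp (-(s*(q-a))) := by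
    refine le_trans ?_ h1
    have hid : q * (a⁻¹ * (1 - (a⁻¹ + s) * (q - a)))
        = 1 - s*(q-a) - (q-a)^2 * (a⁻¹ * (a⁻¹ + s)) := by
      field_simp
      ring
    rw [hid]
    have h2 : 0 ≤ (q-a)^2 * (a⁻¹ * (a⁻¹ + s)) := by positivity
    linarith
  rw [hE]
  calc a⁻¹ * Real.exp (-(s*a)) * (1 - (a⁻¹ + s) * (q - a))
      = (q * (a⁻¹ * (1 - (a⁻¹ + s) * (q - a)))) * (q⁻¹ * Real.exp (-(s*a))) := by
        field_simp
    _ ≤ Real.exp (-(s*(q-a))) * (q⁻¹ * Real.exp (-(s*a))) :=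
        mul_le_mul_of_nonneg_right key (by positivity)
    _ = q⁻¹ * (Real.exp (-(s*(q-a))) * Real.exp (-(s*a))) := by ring

private lemma gauss_nat_le (n : ℕ) :
    Real.exp (-(π^2) * (n:ℝ)^2) ≤ Real.exp (-3) ^ n := by
  rw [← Real.exp_nat_mul]
  apply Real.exp_le_exp.2
  have hπ : (3:ℝ) < π ^ 2 := by nlinarith [Real.pi_gt_three]
  have hn : (n:ℝ) ≤ (n:ℝ)^2 := by
    have : (n:ℕ) ≤ n^2 := Nat.le_self_pow two_ne_zero n
    exact_mod_cast this
  have h2 : 0 ≤ (n:ℝ) := Nat.cast_nonneg n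
  nlinarith [sq_nonneg (n:ℝ)]

private lemma summable_gauss_nat : Summable (fun n : ℕ => Real.exp (-(π^2) * (n:ℝ)^2)) := by
  refine Summable.of_nonneg_of_le (fun n => (Real.exp_pos _).le) gauss_nat_le
    (summable_geometric_of_lt_one (Real.exp_pos _).le ?_)
  calc Real.exp (-3) < Real.exp 0 := Real.exp_lt_exp.2 (by norm_num)
    _ = 1 := Real.exp_zero

private lemma summable_gauss_nat' : Summable (fun n : ℕ => Real.exp (-(π^2) * (((n:ℤ)):ℝ)^2)) := by
  simp only [Int.cast_natCast]
  exact summable_gauss_nat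

private lemma summable_gauss_neg :
    Summable (fun n : ℕ => Real.exp (-(π^2) * (((-((n:ℤ)+1)) : ℤ):ℝ)^2)) := by
  have heq : ∀ n : ℕ, Real.exp (-(π^2) * (((-((n:ℤ)+1)) : ℤ):ℝ)^2)
      = Real.exp (-(π^2) * (((n:ℝ)+1))^2) := by
    intro n; push_cast; ring_nf
  simp only [heq]
  have := (summable_nat_add_iff (f := fun n : ℕ => Real.exp (-(π^2) * (n:ℝ)^2)) 1).2
    summable_gauss_nat
  simpa using this

private lemma summable_gauss_int : Summable (fun n : ℤ => Real.exp (-(π^2) * (n:ℝ)^2)) :=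
  Summable.of_nat_of_neg_add_one summable_gauss_nat' summable_gauss_neg

private lemma exp_neg3_le : Real.exp (-3) ≤ 1/20 := by
  rw [Real.exp_neg, inv_le_comm₀ (Real.exp_pos _) (by norm_num)]
  have h3 : Real.exp 3 = Real.exp 1 ^ 3 := by
    rw [← Real.exp_nat_mul]; norm_num
  have h := Real.exp_one_gt_d9
  have hcube : (2.7182818283:ℝ)^3 ≤ Real.exp 1 ^ 3 :=
    pow_le_pow_left₀ (by norm_num) h.le 3
  rw [h3]
  nlinarith [hcube]

private lemma tsum_gauss_pow_le :
    (∑' n : ℕ, Real.exp (-3) ^ (n+1)) ≤ 1/19 := by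
  set r : ℝ := Real.exp (-3) with hr
  have hr0 : 0 < r := Real.exp_pos _
  have hr20 : r ≤ 1/20 := exp_neg3_le
  have hr1 : r < 1 := by linarith
  have htail : (∑' n : ℕ, r ^ (n+1)) = r * (1 - r)⁻¹ := by
    have h : (fun n : ℕ => r ^ (n+1)) = (fun n : ℕ => r * r ^ n) := by
      funext n; rw [pow_succ]; ring
    rw [h, tsum_mul_left, tsum_geometric_of_lt_one hr0.le hr1]
  rw [htail, ← div_eq_mul_inv, div_le_iff₀ (by linarith)]
  linarith

private lemma gauss_nat_le' (n : ℕ) :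
    Real.exp (-(π^2) * (((n:ℝ)+1))^2) ≤ Real.exp (-3) ^ (n+1) := by
  have := gauss_nat_le (n+1)
  have hc : (((n+1:ℕ)):ℝ) = (n:ℝ)+1 := by push_cast; ring
  rwa [hc] at this

private lemma gauss_int_sum_le : (∑' n : ℤ, Real.exp (-(π^2) * (n:ℝ)^2)) ≤ 21/19 := by
  have hgeo : Summable (fun n : ℕ => Real.exp (-3) ^ (n+1)) := by
    refine (summable_nat_add_iff 1).2 (summable_geometric_of_lt_one (Real.exp_pos _).le ?_)
    calc Real.exp (-3) < Real.exp 0 := Real.exp_lt_exp.2 (by norm_num)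
      _ = 1 := Real.exp_zero
  have hsplit := tsum_of_nat_of_neg_add_one
    (f := fun n : ℤ => Real.exp (-(π^2) * (n:ℝ)^2)) summable_gauss_nat' summable_gauss_neg
  rw [hsplit]
  have hnat : (∑' n : ℕ, Real.exp (-(π^2) * (((n:ℤ)):ℝ)^2)) ≤ 1 + 1/19 := by
    rw [Summable.tsum_eq_zero_add summable_gauss_nat']
    have h0 : Real.exp (-(π^2) * ((((0:ℕ):ℤ)):ℝ)^2) = 1 := by norm_num
    rw [h0]
    have hle : (∑' n : ℕ, Real.exp (-(π^2) * ((((n+1:ℕ):ℤ)):ℝ)^2))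
        ≤ ∑' n : ℕ, Real.exp (-3) ^ (n+1) := by
      refine Summable.tsum_le_tsum (fun n => ?_) ((summable_nat_add_iff 1).2 summable_gauss_nat') hgeo
      have hc : ((((n+1:ℕ):ℤ)):ℝ) = (n:ℝ)+1 := by push_cast; ring
      rw [hc]
      exact gauss_nat_le' n
    linarith [le_trans hle tsum_gauss_pow_le]
  have hneg : (∑' n : ℕ, Real.exp (-(π^2) * (((-((n:ℤ)+1)) : ℤ):ℝ)^2)) ≤ 1/19 := by
    have heq : ∀ n : ℕ, Real.exp (-(π^2) * (((-((n:ℤ)+1)) : ℤ):ℝ)^2)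
        = Real.exp (-(π^2) * (((n:ℝ)+1))^2) := by
      intro n; push_cast; ring_nf
    simp only [heq]
    have hle : (∑' n : ℕ, Real.exp (-(π^2) * (((n:ℝ)+1))^2))
        ≤ ∑' n : ℕ, Real.exp (-3) ^ (n+1) := by
      refine Summable.tsum_le_tsum (fun n => gauss_nat_le' n) ?_ hgeo
      have := summable_gauss_neg
      simpa only [heq] using this
    linarith [le_trans hle tsum_gauss_pow_le]
  linarith

private lemma gauss_int_one_le : 1 ≤ (∑' n : ℤ, Real.exp (-(π^2) * (n:ℝ)^2)) := by
  have h0 : Real.exp (-(π^2) * (((0:ℤ)):ℝ)^2) = 1 := by norm_num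
  calc (1:ℝ) = Real.exp (-(π^2) * (((0:ℤ)):ℝ)^2) := h0.symm
    _ ≤ ∑' n : ℤ, Real.exp (-(π^2) * (n:ℝ)^2) :=
        Summable.le_tsum summable_gauss_int 0 (fun n _ => (Real.exp_pos _).le)

private lemma gauss_pi (m : ℕ) :
    Summable (fun l : Fin m → ℤ => Real.exp (-(π ^ 2) * (∑ i, ((l i : ℝ)) ^ 2)))
    ∧ (∑' l : Fin m → ℤ, Real.exp (-(π ^ 2) * (∑ i, ((l i : ℝ)) ^ 2)))
      = (∑' n : ℤ, Real.exp (-(π ^ 2) * (n:ℝ) ^ 2)) ^ m := by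
  induction m with
  | zero =>
      constructor
      · exact Summable.of_finite
      · rw [tsum_eq_single (fun i => i.elim0) (fun b hb => absurd (Subsingleton.elim b _) hb)]
        simp
  | succ n ih =>
      set g : ℤ → ℝ := fun k => Real.exp (-(π^2) * (k:ℝ)^2) with hg
      set G : (Fin n → ℤ) → ℝ := fun l => Real.exp (-(π^2) * (∑ i, ((l i:ℝ))^2)) with hG
      have hgnorm : (fun k => ‖g k‖) = g := funext fun k => Real.norm_of_nonneg (Real.exp_pos _).le
      have hGnorm : (fun l => ‖G l‖) = G := funext fun l => Real.norm_of_nonneg (Real.exp_pos _).le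
      have hprod : Summable (fun p : ℤ × (Fin n → ℤ) => g p.1 * G p.2) := by
        apply summable_mul_of_summable_norm
        · rw [hgnorm]; exact summable_gauss_int
        · rw [hGnorm]; exact ih.1
      set e : (ℤ × (Fin n → ℤ)) ≃ (Fin (n+1) → ℤ) := Fin.consEquiv (fun _ => ℤ) with he
      have hcomp : ∀ p : ℤ × (Fin n → ℤ),
          Real.exp (-(π ^ 2) * (∑ i, (((e p) i : ℝ)) ^ 2)) = g p.1 * G p.2 := by
        rintro ⟨x, l⟩
        have hsum : (∑ i, (((e (x, l)) i : ℝ)) ^ 2)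
            = ((x:ℝ))^2 + ∑ i : Fin n, ((l i : ℝ))^2 := by
          rw [he]
          simp [Fin.sum_univ_succ, Fin.cons_zero, Fin.cons_succ, Fin.consEquiv]
        rw [hsum, mul_add, Real.exp_add]
      constructor
      · rw [← e.summable_iff]
        have : ((fun l : Fin (n+1) → ℤ =>
            Real.exp (-(π ^ 2) * (∑ i, ((l i : ℝ)) ^ 2))) ∘ e)
            = fun p : ℤ × (Fin n → ℤ) => g p.1 * G p.2 := funext hcomp
        rw [this]; exact hprod
      · calc (∑' l : Fin (n+1) → ℤ, Real.exp (-(π ^ 2) * (∑ i, ((l i : ℝ)) ^ 2)))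
            = ∑' p : ℤ × (Fin n → ℤ), Real.exp (-(π ^ 2) * (∑ i, (((e p) i : ℝ)) ^ 2)) :=
              (e.tsum_eq _).symm
          _ = ∑' p : ℤ × (Fin n → ℤ), g p.1 * G p.2 := tsum_congr hcomp
          _ = (∑' k : ℤ, g k) * (∑' l : Fin n → ℤ, G l) :=
              (Summable.tsum_mul_tsum summable_gauss_int ih.1 hprod).symm
          _ = (∑' k : ℤ, g k) * (∑' k : ℤ, g k) ^ n := by rw [ih.2]
          _ = (∑' k : ℤ, g k) ^ (n+1) := by rw [pow_succ]; ring

/-- Eigenvalue lower bound from torsional rigidity: let `λ_t, T_t` be the (random)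
principal Dirichlet eigenvalue and torsional rigidity of a family of open subsets of
`𝕋^m`, with the pointwise bound `T_t ≥ λ_t⁻¹ π(s)⁻¹ e^{-s λ_t}` for all `s > 0`, where
`π(s)` is the diagonal torus heat kernel. If `E[T_t] → 0` as `t → ∞`, then for all
large `t`, `E[λ_t] ≥ E[T_t]^{-2/(m+2)}`. -/
theorem expected_eigenvalue_ge_expected_torsional_rigidity_pow
    (m : ℕ) (hm : 1 ≤ m)
    {Ω : Type*} [MeasurableSpace Ω] (P : Measure Ω) [IsProbabilityMeasure P]
    (lam T : ℝ → Ω → ℝ) (pis : ℝ → ℝ)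
    (hpis : ∀ u : ℝ, 0 < u → pis u = (4 * π * u) ^ (-(m:ℝ)/2) *
      ∑' l : Fin m → ℤ, Real.exp (-(π ^ 2) * (∑ i, ((l i : ℝ)) ^ 2) / u))
    (hlampos : ∀ t ω, 0 < lam t ω)
    (hbound : ∀ t ω, ∀ s : ℝ, 0 < s →
      (lam t ω)⁻¹ * (pis s)⁻¹ * Real.exp (-s * lam t ω) ≤ T t ω)
    (hTint : ∀ t, Integrable (T t) P) (hlamint : ∀ t, Integrable (lam t) P)
    (hTpos : ∀ t, 0 < ∫ ω, T t ω ∂P)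
    (hlim : Tendsto (fun t => ∫ ω, T t ω ∂P) atTop (nhds 0)) :
    ∀ᶠ t in atTop, (∫ ω, T t ω ∂P) ^ (-(2:ℝ)/((m:ℝ) + 2)) ≤ ∫ ω, lam t ω ∂P := by
  set σ : ℝ := ∑' n : ℤ, Real.exp (-(π ^ 2) * (n:ℝ) ^ 2) with hσdef
  have hσ1 : 1 ≤ σ := gauss_int_one_le
  have hσub : σ ≤ 21/19 := gauss_int_sum_le
  have hσ0 : 0 < σ := lt_of_lt_of_le one_pos hσ1
  -- expectations
  set L : ℝ → ℝ := fun t => ∫ ω, T t ω ∂P with hLdef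
  set A : ℝ → ℝ := fun t => ∫ ω, lam t ω ∂P with hAdef
  have hApos : ∀ t, 0 < A t := by
    intro t
    refine (integral_pos_iff_support_of_nonneg (fun ω => (hlampos t ω).le) (hlamint t)).2 ?_
    have hsupp : Function.support (lam t) = Set.univ :=
      Set.eq_univ_of_forall fun ω => (hlampos t ω).ne'
    rw [hsupp]
    simp
  -- bounds on pis on (0,1]
  have hpis_bounds : ∀ s : ℝ, 0 < s → s ≤ 1 →
      0 < pis s ∧ pis s ≤ (4*π*s) ^ (-(m:ℝ)/2) * σ ^ m := by
    intro s hs hs1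
    have h4πs : (0:ℝ) < 4*π*s := by positivity
    have hfac : 0 < (4*π*s) ^ (-(m:ℝ)/2) := Real.rpow_pos_of_pos h4πs _
    have hle : ∀ l : Fin m → ℤ, Real.exp (-(π ^ 2) * (∑ i, ((l i : ℝ)) ^ 2) / s)
        ≤ Real.exp (-(π ^ 2) * (∑ i, ((l i : ℝ)) ^ 2)) := by
      intro l
      apply Real.exp_le_exp.2
      have hq : 0 ≤ ∑ i, ((l i : ℝ)) ^ 2 := Finset.sum_nonneg fun i _ => sq_nonneg _
      rw [div_le_iff₀ hs]
      nlinarith [mul_nonneg (sq_nonneg π) hq]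
    have hsummable_s : Summable (fun l : Fin m → ℤ =>
        Real.exp (-(π ^ 2) * (∑ i, ((l i : ℝ)) ^ 2) / s)) :=
      Summable.of_nonneg_of_le (fun l => (Real.exp_pos _).le) hle (gauss_pi m).1
    have h1le : 1 ≤ ∑' l : Fin m → ℤ, Real.exp (-(π ^ 2) * (∑ i, ((l i : ℝ)) ^ 2) / s) := by
      have h0 : Real.exp (-(π ^ 2) * (∑ i, (((0 : Fin m → ℤ)) i : ℝ) ^ 2) / s) = 1 := by
        simp
      calc (1:ℝ) = Real.exp (-(π ^ 2) * (∑ i, (((0 : Fin m → ℤ)) i : ℝ) ^ 2) / s) := h0.symm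
        _ ≤ _ := Summable.le_tsum hsummable_s 0 (fun l _ => (Real.exp_pos _).le)
    have hub : (∑' l : Fin m → ℤ, Real.exp (-(π ^ 2) * (∑ i, ((l i : ℝ)) ^ 2) / s)) ≤ σ ^ m :=
      (Summable.tsum_le_tsum hle hsummable_s (gauss_pi m).1).trans_eq (gauss_pi m).2
    rw [hpis s hs]
    exact ⟨mul_pos hfac (lt_of_lt_of_le one_pos h1le),
      mul_le_mul_of_nonneg_left hub hfac.le⟩
  -- key integrated inequality
  have hkey : ∀ t : ℝ, ∀ s : ℝ, 0 < s → s ≤ 1 →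
      (pis s)⁻¹ * ((A t)⁻¹ * Real.exp (-(s * A t))) ≤ L t := by
    intro t s hs hs1
    obtain ⟨hp, -⟩ := hpis_bounds s hs hs1
    have ha0 : 0 < A t := hApos t
    set a : ℝ := A t with ha
    set E : ℝ := Real.exp (-(s * a)) with hE
    set c1 : ℝ := (pis s)⁻¹ * (a⁻¹ * E * (1 + (a⁻¹ + s) * a)) with hc1
    set c2 : ℝ := -((pis s)⁻¹ * (a⁻¹ * E * (a⁻¹ + s))) with hc2
    have hpoint : ∀ ω, c1 + c2 * lam t ω ≤ T t ω := by
      intro ω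
      have h1 : c1 + c2 * lam t ω
          = (pis s)⁻¹ * (a⁻¹ * E * (1 - (a⁻¹ + s) * (lam t ω - a))) := by
        rw [hc1, hc2]; ring
      rw [h1]
      calc (pis s)⁻¹ * (a⁻¹ * E * (1 - (a⁻¹ + s) * (lam t ω - a)))
          ≤ (pis s)⁻¹ * ((lam t ω)⁻¹ * Real.exp (-(s * lam t ω))) :=
            mul_le_mul_of_nonneg_left
              (tangent_line s a (lam t ω) hs ha0 (hlampos t ω)) (inv_nonneg.2 hp.le)
        _ = (lam t ω)⁻¹ * (pis s)⁻¹ * Real.exp (-s * lam t ω) := by ring_nf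
        _ ≤ T t ω := hbound t ω s hs
    have hint : Integrable (fun ω => c1 + c2 * lam t ω) P :=
      (integrable_const c1).add ((hlamint t).const_mul c2)
    have hmono := integral_mono hint (hTint t) hpoint
    rw [integral_add (integrable_const c1) ((hlamint t).const_mul c2), integral_const,
      integral_const_mul, probReal_univ, smul_eq_mul, one_mul] at hmono
    have hIA : (∫ ω, lam t ω ∂P) = a := rfl
    rw [hIA] at hmono
    have hsum : (pis s)⁻¹ * (a⁻¹ * E) = c1 + c2 * a := by rw [hc1, hc2]; ring
    calc (pis s)⁻¹ * (a⁻¹ * E) = c1 + c2 * a := hsum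
      _ ≤ L t := hmono
  -- numeric bound
  have hnum : Real.exp 1 * σ ^ m ≤ (4*π) ^ ((m:ℝ)/2) := by
    have h4π : (0:ℝ) < 4*π := by positivity
    have hβ : Real.exp 1 * σ ≤ Real.sqrt (4*π) := by
      rw [show Real.exp 1 * σ = |Real.exp 1 * σ| from
        (abs_of_pos (by positivity)).symm, ← Real.sqrt_sq_eq_abs]
      apply Real.sqrt_le_sqrt
      have he : Real.exp 1 ≤ 2.7182818286 := Real.exp_one_lt_d9.le
      have hmul : Real.exp 1 * σ ≤ 2.7182818286 * (21/19) :=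
        mul_le_mul he hσub hσ0.le (by norm_num)
      nlinarith [Real.pi_gt_three, mul_le_mul hmul hmul (by positivity) (by norm_num)]
    have hsq : (4*π) ^ ((m:ℝ)/2) = Real.sqrt (4*π) ^ m := by
      rw [Real.sqrt_eq_rpow, ← Real.rpow_natCast ((4*π) ^ ((1:ℝ)/2)) m,
        ← Real.rpow_mul h4π.le]
      congr 1
      ring
    rw [hsq]
    calc Real.exp 1 * σ ^ m ≤ Real.exp 1 ^ m * σ ^ m := by
          have h1 : Real.exp 1 ≤ Real.exp 1 ^ m :=
            le_self_pow₀ (Real.one_le_exp zero_le_one) (by omega)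
          exact mul_le_mul_of_nonneg_right h1 (by positivity)
      _ = (Real.exp 1 * σ) ^ m := (mul_pow _ _ _).symm
      _ ≤ Real.sqrt (4*π) ^ m := pow_le_pow_left₀ (by positivity) hβ m
  -- eventually A t ≥ 1
  have hp1 := (hpis_bounds 1 one_pos le_rfl).1
  have hc0 : (0:ℝ) < (pis 1)⁻¹ * Real.exp (-1) := by positivity
  have hev1 : ∀ᶠ t in atTop, 1 ≤ A t := by
    filter_upwards [hlim.eventually (Iio_mem_nhds hc0)] with t ht
    by_contra hA1
    push_neg at hA1
    have ha0 := hApos t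
    have hk := hkey t 1 one_pos le_rfl
    have h1 : (pis 1)⁻¹ * Real.exp (-1)
        ≤ (pis 1)⁻¹ * ((A t)⁻¹ * Real.exp (-(1 * A t))) := by
      refine mul_le_mul_of_nonneg_left ?_ (inv_nonneg.2 hp1.le)
      have e1 : Real.exp (-1) ≤ Real.exp (-(1 * A t)) := Real.exp_le_exp.2 (by linarith)
      have e2 : 1 ≤ (A t)⁻¹ := (one_le_inv_iff₀.2 ⟨ha0, hA1.le⟩)
      calc Real.exp (-1) = 1 * Real.exp (-1) := (one_mul _).symm
        _ ≤ (A t)⁻¹ * Real.exp (-(1 * A t)) :=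
          mul_le_mul e2 e1 (Real.exp_pos _).le (by positivity)
    exact absurd (lt_of_le_of_lt (h1.trans hk) ht) (lt_irrefl _)
  -- conclusion
  filter_upwards [hev1] with t h1A
  have ha0 : 0 < A t := hApos t
  set s : ℝ := (A t)⁻¹ with hsdef
  have hs : 0 < s := inv_pos.2 ha0
  have hs1 : s ≤ 1 := inv_le_one_of_one_le₀ h1A
  have hK := hkey t s hs hs1
  rw [show s * A t = 1 from inv_mul_cancel₀ ha0.ne'] at hK
  obtain ⟨hppos, hpub⟩ := hpis_bounds s hs hs1
  have h4πs : (0:ℝ) < 4*π*s := by positivity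
  have hinv : ((4*π*s) ^ (-(m:ℝ)/2) * σ ^ m)⁻¹ ≤ (pis s)⁻¹ :=
    inv_anti₀ hppos hpub
  have hP4 : ((4*π*s) ^ (-(m:ℝ)/2) * σ ^ m)⁻¹
      = (4*π) ^ ((m:ℝ)/2) * s ^ ((m:ℝ)/2) * (σ ^ m)⁻¹ := by
    rw [neg_div, Real.rpow_neg h4πs.le, mul_inv, inv_inv,
      Real.mul_rpow (by positivity) hs.le]
  have hK' : (4*π) ^ ((m:ℝ)/2) * s ^ ((m:ℝ)/2) * (σ ^ m)⁻¹ * (s * Real.exp (-1)) ≤ L t := by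
    calc (4*π) ^ ((m:ℝ)/2) * s ^ ((m:ℝ)/2) * (σ ^ m)⁻¹ * (s * Real.exp (-1))
        = ((4*π*s) ^ (-(m:ℝ)/2) * σ ^ m)⁻¹ * (s * Real.exp (-1)) := by rw [hP4]
      _ ≤ (pis s)⁻¹ * (s * Real.exp (-1)) :=
          mul_le_mul_of_nonneg_right hinv (by positivity)
      _ = (pis s)⁻¹ * ((A t)⁻¹ * Real.exp (-1)) := by rw [hsdef]
      _ ≤ L t := hK
  have h1B : 1 ≤ (4*π) ^ ((m:ℝ)/2) * ((σ ^ m)⁻¹ * Real.exp (-1)) := by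
    have hpos : (0:ℝ) < Real.exp 1 * σ ^ m := by positivity
    have := (one_le_div hpos).2 hnum
    calc (1:ℝ) ≤ (4*π) ^ ((m:ℝ)/2) / (Real.exp 1 * σ ^ m) := this
      _ = (4*π) ^ ((m:ℝ)/2) * ((σ ^ m)⁻¹ * Real.exp (-1)) := by
          rw [Real.exp_neg, div_eq_mul_inv, mul_inv]
          ring
  have hcalc : s ^ (((m:ℝ)+2)/2) ≤ L t := by
    calc s ^ (((m:ℝ)+2)/2) = s ^ ((m:ℝ)/2) * s := by
          rw [show ((m:ℝ)+2)/2 = (m:ℝ)/2 + 1 by ring, Real.rpow_add hs, Real.rpow_one]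
      _ = 1 * (s ^ ((m:ℝ)/2) * s) := (one_mul _).symm
      _ ≤ ((4*π) ^ ((m:ℝ)/2) * ((σ ^ m)⁻¹ * Real.exp (-1))) * (s ^ ((m:ℝ)/2) * s) := by
          refine mul_le_mul_of_nonneg_right h1B ?_
          positivity
      _ = (4*π) ^ ((m:ℝ)/2) * s ^ ((m:ℝ)/2) * (σ ^ m)⁻¹ * (s * Real.exp (-1)) := by ring
      _ ≤ L t := hK'
  have hLpos : 0 < L t := hTpos t
  have hmain := Real.rpow_le_rpow_of_nonpos (by positivity) hcalc
    (show -(2:ℝ)/((m:ℝ)+2) ≤ 0 from div_nonpos_of_nonpos_of_nonneg (by norm_num) (by positivity))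
  have hfin : (s ^ (((m:ℝ)+2)/2)) ^ (-(2:ℝ)/((m:ℝ)+2)) = A t := by
    have hm2 : ((m:ℝ)+2) ≠ 0 := by positivity
    rw [← Real.rpow_mul hs.le, show (((m:ℝ)+2)/2) * (-(2:ℝ)/((m:ℝ)+2)) = -1 by
      field_simp, Real.rpow_neg_one, hsdef, inv_inv]
  calc L t ^ (-(2:ℝ)/((m:ℝ)+2)) ≤ (s ^ (((m:ℝ)+2)/2)) ^ (-(2:ℝ)/((m:ℝ)+2)) := hmain
    _ = A t := hfin
end
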